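/- Fix a real number δ with 0 < δ ≤ 1 and an integer n ≥ 4. Let K be a δ-Lipschitz filling of the cycle graph C_n, fix vertices x, y of C_n with d_{C_n}(x,y) = ⌊n/2⌋, and let L and R denote the two connected components of C_n − x − y. Then every set S ⊆ V(K)\{x,y} that separates L from R in K − x − y satisfies |S| ≥ δ·⌊n/2⌋ − 1. -/

import Mathlib

open SimpleGraph Finset

/-- An abstract triangulation: a finite nonempty set of triangles (3-element
vertex sets) such that every edge (2-element subset of a triangle) lies in
exactly 1 or 2 triangles. -/
structure AbstractTriangulation (V : Type) [DecidableEq V] [Fintype V] where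
  tris : Finset (Finset V)
  tris_nonempty : tris.Nonempty
  card_three : ∀ t ∈ tris, t.card = 3
  edge_mem : ∀ e : Finset V, e.card = 2 → (∃ t ∈ tris, e ⊆ t) →
    (tris.filter fun t => e ⊆ t).card = 1 ∨ (tris.filter fun t => e ⊆ t).card = 2

namespace AbstractTriangulation

variable {V : Type} [DecidableEq V] [Fintype V]

/-- The vertex set `V(K)`: vertices lying in some triangle. -/
def verts (K : AbstractTriangulation V) : Finset V := K.tris.biUnion id

/-- The edge set `E(K)`: 2-element subsets of triangles. -/
def edges (K : AbstractTriangulation V) : Finset (Finset V) :=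
  K.tris.biUnion fun t => t.powersetCard 2

/-- The 1-skeleton of `K`: `u,v` adjacent iff `{u,v}` is an edge of `K`. -/
def skeleton (K : AbstractTriangulation V) : SimpleGraph V where
  Adj u v := u ≠ v ∧ ∃ t ∈ K.tris, u ∈ t ∧ v ∈ t
  symm := by refine ⟨?_⟩; rintro u v ⟨h, t, ht, hu, hv⟩; exact ⟨h.symm, t, ht, hv, hu⟩
  loopless := by refine ⟨?_⟩; rintro u ⟨h, -⟩; exact h rfl

/-- The boundary `∂K`: the graph on the vertices of `K` whose edges are the
edges of `K` contained in exactly one triangle. -/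
def boundary (K : AbstractTriangulation V) : SimpleGraph V where
  Adj u v := u ≠ v ∧ (K.tris.filter fun t => u ∈ t ∧ v ∈ t).card = 1
  symm := by
    refine ⟨?_⟩
    rintro u v ⟨h, hc⟩
    exact ⟨h.symm, by simpa [and_comm] using hc⟩
  loopless := by refine ⟨?_⟩; rintro u ⟨h, -⟩; exact h rfl

/-- `∂K` is (isomorphic to) the cycle `C_n`, with the identification given by
`f : Fin n → V`: `f` is injective, boundary adjacency corresponds exactly to
cycle adjacency, and every boundary edge joins two vertices in the image of `f`. -/
def BoundaryIsCycle (K : AbstractTriangulation V) (n : ℕ) (f : Fin n → V) : Prop :=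
  Function.Injective f ∧
  (∀ i j : Fin n, K.boundary.Adj (f i) (f j) ↔ (cycleGraph n).Adj i j) ∧
  (∀ u v : V, K.boundary.Adj u v → (∃ i, u = f i) ∧ (∃ j, v = f j))

/-- `K` is a `δ`-Lipschitz filling of `C_n` (with boundary identification `f`):
`∂K = C_n` and `d_K(x,y) ≥ δ · d_{C_n}(x,y)` for all boundary vertices, expressed
by the fact that every walk in the 1-skeleton between boundary vertices has
length at least `δ · d_{C_n}(x,y)`. -/
def IsLipschitzFilling (K : AbstractTriangulation V) (n : ℕ) (δ : ℝ)
    (f : Fin n → V) : Prop :=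
  K.BoundaryIsCycle n f ∧
  ∀ (i j : Fin n) (p : K.skeleton.Walk (f i) (f j)),
    δ * ((cycleGraph n).dist i j : ℝ) ≤ (p.length : ℝ)

end AbstractTriangulation

/-- The cycle graph `C_n` with the vertices `x` and `y` deleted (as a graph on
`Fin n` in which `x` and `y` have become isolated). -/
def deletedCycle (n : ℕ) (x y : Fin n) : SimpleGraph (Fin n) where
  Adj u v := (SimpleGraph.cycleGraph n).Adj u v ∧ u ≠ x ∧ u ≠ y ∧ v ≠ x ∧ v ≠ y
  symm := by refine ⟨?_⟩; rintro u v ⟨h, h1, h2, h3, h4⟩; exact ⟨h.symm, h3, h4, h1, h2⟩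
  loopless := by refine ⟨?_⟩; rintro u ⟨h, -⟩; exact h.ne rfl

/-!
Put `T = S ∪ {x, y}`, let `A` be the set of vertices reached from `L` in `K − T`, and let `C` be
the set of vertices joined to `x` by a path inside `T`. A triangle cannot have exactly one vertex
in `A`, one in `C` and one elsewhere: that vertex, adjacent to `A` but outside it, lies in `T`,
hence in `C`. So every triangle has an even number of `A`–`C` edges, and since interior edges lie
in two triangles, the number of `A`–`C` boundary edges is even. These edges all lie on the arc
of `C_n` from `x` to `y` through `L`, whose vertices are in `A` or in `T`; walking along it, the
`A`–`C` edges are exactly the steps at which membership in `C` changes. Hence `y ∈ C`: a path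
from `x` to `y` inside `T` has length at most `|S| + 1`, and the Lipschitz condition bounds it
below by `δ ⌊n/2⌋`.
-/

theorem even_card_inter_mul_card_inter {α : Type*} [DecidableEq α] {t A C : Finset α}
    (ht : Odd #t) (hAC : Disjoint A C)
    (hcover : (t ∩ A).Nonempty → (t ∩ C).Nonempty → t ⊆ A ∪ C) :
    Even (#(t ∩ A) * #(t ∩ C)) := by
  rcases (t ∩ A).eq_empty_or_nonempty with hA | hA
  · simp [hA]
  rcases (t ∩ C).eq_empty_or_nonempty with hC | hC
  · simp [hC]
  have hsplit : #(t ∩ A) + #(t ∩ C) = #t := by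
    rw [← card_union_of_disjoint (disjoint_of_subset_left inter_subset_right
      (disjoint_of_subset_right inter_subset_right hAC)), ← inter_union_distrib_left,
      inter_eq_left.mpr (hcover hA hC)]
  rw [← hsplit] at ht
  rcases Nat.even_or_odd #(t ∩ A) with h | h
  · exact h.mul_right _
  · exact (Nat.odd_add.mp ht).mp h |>.mul_left _

namespace SimpleGraph

variable {V : Type*} (G : SimpleGraph V)

def ReachableIn (s : Set V) (u v : V) : Prop :=
  ∃ p : G.Walk u v, ∀ w ∈ p.support, w ∈ s

variable {G} {s : Set V} {u v w : V}

theorem ReachableIn.refl (hu : u ∈ s) : G.ReachableIn s u u :=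
  ⟨.nil, by simpa using hu⟩

theorem ReachableIn.mem_right (h : G.ReachableIn s u v) : v ∈ s :=
  h.elim fun p hp => hp v p.end_mem_support

theorem ReachableIn.concat (h : G.ReachableIn s u v) (hvw : G.Adj v w) (hw : w ∈ s) :
    G.ReachableIn s u w := by
  obtain ⟨p, hp⟩ := h
  refine ⟨p.concat hvw, fun z hz => ?_⟩
  rw [Walk.support_concat, List.mem_append, List.mem_singleton] at hz
  exact hz.elim (hp z) (· ▸ hw)

theorem ReachableIn.exists_walk_length_lt [DecidableEq V] {t : Finset V}
    (h : G.ReachableIn t u v) : ∃ p : G.Walk u v, p.length < #t := by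
  obtain ⟨p, hp⟩ := h
  refine ⟨p.bypass, ?_⟩
  have hsub : p.bypass.support.toFinset ⊆ t := fun z hz =>
    hp z (p.support_bypass_subset_support (List.mem_toFinset.mp hz))
  have := card_le_card hsub
  rw [List.toFinset_card_of_nodup p.bypass_isPath.support_nodup, Walk.length_support] at this
  omega

theorem eq_of_union_eq_of_preconnected {L R P Q : Set V} (hPQ : P ∪ Q = L ∪ R)
    (hdisj : Disjoint L R) (hP : ∀ u ∈ P, ∀ v ∈ P, G.Reachable u v)
    (hQ : ∀ u ∈ Q, ∀ v ∈ Q, G.Reachable u v) (hLR : ∀ u ∈ L, ∀ v ∈ R, ¬ G.Reachable u v)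
    (hLP : (L ∩ P).Nonempty) (hR : R.Nonempty) : L = P := by
  obtain ⟨l, hlL, hlP⟩ := hLP
  obtain ⟨r, hr⟩ := hR
  have hPL : P ⊆ L := fun i hi => (hPQ ▸ Set.mem_union_left Q hi : i ∈ L ∪ R).resolve_right
    fun hiR => hLR l hlL i hiR (hP l hlP i hi)
  have hrQ : r ∈ Q := (hPQ.symm ▸ Set.mem_union_right L hr : r ∈ P ∪ Q).resolve_left
    fun hrP => Set.disjoint_left.mp hdisj (hPL hrP) hr
  refine subset_antisymm (fun i hi => ?_) hPL
  exact (hPQ.symm ▸ Set.mem_union_left R hi : i ∈ P ∪ Q).resolve_right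
    fun hiQ => hLR i hi r hr (hQ i hiQ r hrQ)

end SimpleGraph

section Cycle

open scoped Fin.NatCast

variable {n : ℕ}

theorem sum_sum_cycleGraph_adj {M : Type*} [AddCommMonoid M]
    (g : Fin (n + 3) → Fin (n + 3) → M) :
    ∑ i, ∑ j, (if (cycleGraph (n + 3)).Adj i j then g i j else 0) =
      ∑ i, (g i (i + 1) + g (i + 1) i) := by
  have hinner : ∀ i : Fin (n + 3),
      ∑ j, (if (cycleGraph (n + 3)).Adj i j then g i j else 0) = g i (i - 1) + g i (i + 1) := by
    intro i
    have hne : i - 1 ≠ i + 1 := by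
      simp only [ne_eq, sub_eq_iff_eq_add, add_assoc i, left_eq_add]
      exact ne_of_beq_false rfl
    rw [← sum_filter, ← neighborFinset_eq_filter, cycleGraph_neighborFinset (n := n + 1),
      sum_pair hne]
  simp only [hinner, sum_add_distrib]
  rw [add_comm]
  congr 1
  exact Fintype.sum_equiv (Equiv.subRight 1) _ _ fun i => by simp

theorem deletedCycle_comm (x y : Fin n) : deletedCycle n y x = deletedCycle n x y := by
  ext u v
  simp only [deletedCycle]
  tauto

def arcInterior (x y : Fin n) : Set (Fin n) := {i | 0 < (i - x).val ∧ (i - x).val < (y - x).val}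

theorem ne_right_of_mem_arcInterior {x y i : Fin n} (hi : i ∈ arcInterior x y) : i ≠ y := by
  rintro rfl
  exact hi.2.false

variable [NeZero n]

theorem ne_left_of_mem_arcInterior {x y i : Fin n} (hi : i ∈ arcInterior x y) : i ≠ x := by
  rintro rfl
  simp [arcInterior] at hi

theorem add_val_sub (x y : Fin n) : x + ((y - x).val : Fin n) = y := by
  simp

theorem add_natCast_mem_arcInterior_iff {x y : Fin n} {k : ℕ} :
    x + (k : Fin n) ∈ arcInterior x y ↔ 0 < k % n ∧ k % n < (y - x).val := by
  simp only [arcInterior, Set.mem_ofPred_eq, add_sub_cancel_left, Fin.val_natCast]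

theorem add_natCast_mem_arcInterior {x y : Fin n} {k : ℕ} (hk0 : 0 < k)
    (hk : k < (y - x).val) : x + (k : Fin n) ∈ arcInterior x y := by
  rw [add_natCast_mem_arcInterior_iff, Nat.mod_eq_of_lt (hk.trans (y - x).isLt)]
  exact ⟨hk0, hk⟩

theorem add_natCast_eq_or_mem_arcInterior {x y : Fin n} {k : ℕ} (hk : k ≤ (y - x).val) :
    x + (k : Fin n) = x ∨ x + (k : Fin n) = y ∨ x + (k : Fin n) ∈ arcInterior x y := by
  rcases Nat.eq_zero_or_pos k with rfl | hk0
  · simp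
  rcases hk.eq_or_lt with rfl | hk
  · exact Or.inr (Or.inl (add_val_sub x y))
  · exact Or.inr (Or.inr (add_natCast_mem_arcInterior hk0 hk))

theorem cycleGraph_adj_add_one (hn : 2 ≤ n) (i : Fin n) : (cycleGraph n).Adj i (i + 1) := by
  rw [cycleGraph_adj', add_sub_cancel_left, Fin.val_one', Nat.mod_eq_of_lt hn]
  exact Or.inr rfl

theorem arcInterior_reachable {x y u v : Fin n} (hu : u ∈ arcInterior x y)
    (hv : v ∈ arcInterior x y) : (deletedCycle n x y).Reachable u v := by
  have hc := (y - x).isLt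
  have hfrom_one : ∀ k, 1 ≤ k → k < (y - x).val →
      (deletedCycle n x y).Reachable (x + (1 : ℕ)) (x + k) := by
    intro k hk
    induction k, hk using Nat.le_induction with
    | base => exact fun _ => .rfl
    | succ k hk ih =>
      intro hkc
      refine (ih (by omega)).trans (Adj.reachable ?_)
      have hi := add_natCast_mem_arcInterior (x := x) (by omega) (by omega : k < (y - x).val)
      have hi' := add_natCast_mem_arcInterior (x := x) (by omega) hkc
      rw [Nat.cast_succ, ← add_assoc] at hi' ⊢
      exact ⟨cycleGraph_adj_add_one (by omega) _, ne_left_of_mem_arcInterior hi,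
        ne_right_of_mem_arcInterior hi, ne_left_of_mem_arcInterior hi',
        ne_right_of_mem_arcInterior hi'⟩
  rw [← add_val_sub x u, ← add_val_sub x v]
  exact (hfrom_one _ hu.1 hu.2).symm.trans (hfrom_one _ hv.1 hv.2)

theorem mem_arcInterior_or_mem_arcInterior {x y i : Fin n} (hxy : x ≠ y) (hx : i ≠ x)
    (hy : i ≠ y) : i ∈ arcInterior x y ∨ i ∈ arcInterior y x := by
  have ha : (i - x).val ≠ 0 := fun h => hx (sub_eq_zero.mp (Fin.ext h))
  have hc : 0 < (y - x).val := Nat.pos_of_ne_zero fun h => hxy (sub_eq_zero.mp (Fin.ext h)).symm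
  have hac : (i - x).val ≠ (y - x).val := fun h => hy (sub_left_inj.mp (Fin.ext h))
  rcases Nat.lt_or_gt_of_ne hac with h | h
  · exact Or.inl ⟨Nat.pos_of_ne_zero ha, h⟩
  have hiy : (i - y).val = (i - x).val - (y - x).val := by
    rw [← sub_sub_sub_cancel_right i y x]
    exact Fin.coe_sub_iff_le.mpr h.le
  have hxy' : (x - y).val = n - (y - x).val := by
    rw [← neg_sub y x, ← zero_sub, Fin.coe_sub_iff_lt.mpr (Fin.lt_def.mpr hc), Fin.val_zero,
      add_zero]
  have := (i - x).isLt
  exact Or.inr ⟨by omega, by omega⟩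

theorem eq_arcInterior_or_eq_arcInterior {x y : Fin n} (hxy : x ≠ y) {L R : Set (Fin n)}
    (hLne : L.Nonempty) (hRne : R.Nonempty) (hdisj : Disjoint L R)
    (hxL : x ∉ L) (hyL : y ∉ L) (hxR : x ∉ R) (hyR : y ∉ R)
    (hcover : ∀ u : Fin n, u ≠ x → u ≠ y → u ∈ L ∨ u ∈ R)
    (hLR : ∀ u ∈ L, ∀ v ∈ R, ¬ (deletedCycle n x y).Reachable u v) :
    L = arcInterior x y ∨ L = arcInterior y x := by
  have hPQ : arcInterior x y ∪ arcInterior y x = L ∪ R := by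
    ext i
    constructor
    · rintro (h | h)
      · exact hcover i (ne_left_of_mem_arcInterior h) (ne_right_of_mem_arcInterior h)
      · exact hcover i (ne_right_of_mem_arcInterior h) (ne_left_of_mem_arcInterior h)
    · rintro (h | h)
      · exact mem_arcInterior_or_mem_arcInterior hxy (by rintro rfl; exact hxL h)
          (by rintro rfl; exact hyL h)
      · exact mem_arcInterior_or_mem_arcInterior hxy (by rintro rfl; exact hxR h)
          (by rintro rfl; exact hyR h)
  have hP : ∀ u ∈ arcInterior x y, ∀ v ∈ arcInterior x y, (deletedCycle n x y).Reachable u v :=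
    fun u hu v hv => arcInterior_reachable hu hv
  have hQ : ∀ u ∈ arcInterior y x, ∀ v ∈ arcInterior y x, (deletedCycle n x y).Reachable u v :=
    fun u hu v hv => deletedCycle_comm x y ▸ arcInterior_reachable hu hv
  obtain ⟨l, hl⟩ := hLne
  rcases (hPQ.symm ▸ Set.mem_union_left R hl : l ∈ arcInterior x y ∪ arcInterior y x) with h | h
  · exact Or.inl (eq_of_union_eq_of_preconnected hPQ hdisj hP hQ hLR ⟨l, hl, h⟩ hRne)
  · exact Or.inr (eq_of_union_eq_of_preconnected ((Set.union_comm _ _).trans hPQ) hdisj hQ hP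
      hLR ⟨l, hl, h⟩ hRne)

theorem sum_univ_eq_sum_range_add_natCast {M : Type*} [AddCommMonoid M] (x : Fin n) {c : ℕ}
    (hc : c ≤ n) (g : Fin n → M) (hg : ∀ k, c ≤ k → k < n → g (x + k) = 0) :
    ∑ i, g i = ∑ k ∈ range c, g (x + k) := by
  calc ∑ i, g i = ∑ i : Fin n, g (x + (i.val : Fin n)) :=
        Fintype.sum_equiv (Equiv.subRight x) _ _ fun i => by simp
    _ = ∑ k ∈ range n, g (x + k) := Fin.sum_univ_eq_sum_range (fun k => g (x + k)) n
    _ = ∑ k ∈ range c, g (x + k) := by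
        refine (sum_subset (range_subset_range.mpr hc) fun k hk hkc => hg k ?_ ?_).symm
        · simpa using hkc
        · simpa using hk

theorem sum_sum_cycleGraph_adj_eq_sub (hn : 3 ≤ n) {x y : Fin n} {A C : Finset (Fin n)}
    (hA : ∀ i ∈ A, i ∈ arcInterior x y) (hAC : Disjoint A C)
    (hstep : ∀ k < (y - x).val, x + k ∉ A → x + k + 1 ∉ A → (x + k ∈ C ↔ x + k + 1 ∈ C)) :
    ∑ i ∈ A, ∑ j ∈ C, (if (cycleGraph n).Adj i j then (1 : ZMod 2) else 0) =
      (if y ∈ C then 1 else 0) - (if x ∈ C then 1 else 0) := by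
  obtain ⟨m, rfl⟩ : ∃ m, n = m + 3 := ⟨n - 3, by omega⟩
  set φ : Fin (m + 3) → ZMod 2 := fun i => if i ∈ C then 1 else 0 with hφ
  set ψ : Fin (m + 3) → ZMod 2 := fun i => if i ∈ A then 1 else 0 with hψ
  have hc := (y - x).isLt
  have hnotA : ∀ k, ¬ (0 < k % (m + 3) ∧ k % (m + 3) < (y - x).val) →
      x + (k : Fin (m + 3)) ∉ A := fun k hk h => hk (add_natCast_mem_arcInterior_iff.mp (hA _ h))
  calc ∑ i ∈ A, ∑ j ∈ C, (if (cycleGraph (m + 3)).Adj i j then (1 : ZMod 2) else 0)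
      = ∑ i, ∑ j, (if (cycleGraph (m + 3)).Adj i j then ψ i * φ j else 0) := by
        rw [← Fintype.sum_ite_mem A]
        refine sum_congr rfl fun i _ => ?_
        rw [← Fintype.sum_ite_mem C]
        by_cases hi : i ∈ A
        · rw [if_pos hi]
          refine sum_congr rfl fun j _ => ?_
          by_cases hj : j ∈ C <;> simp [hψ, hφ, hi, hj]
        · simp [hψ, hi]
    _ = ∑ i, (ψ i * φ (i + 1) + ψ (i + 1) * φ i) := sum_sum_cycleGraph_adj _
    _ = ∑ k ∈ range (y - x).val, (ψ (x + k) * φ (x + k + 1) + ψ (x + k + 1) * φ (x + k)) := by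
        refine sum_univ_eq_sum_range_add_natCast x hc.le _ fun k hck hkn => ?_
        have h1 : x + (k : Fin (m + 3)) ∉ A := hnotA k (by rw [Nat.mod_eq_of_lt hkn]; omega)
        have h2 : x + (k : Fin (m + 3)) + 1 ∉ A := by
          rw [add_assoc, ← Nat.cast_succ]
          refine hnotA (k + 1) ?_
          rcases Nat.lt_or_ge (k + 1) (m + 3) with h | h
          · rw [Nat.mod_eq_of_lt h]; omega
          · rw [show k + 1 = m + 3 by omega, Nat.mod_self]; omega
        simp [hψ, h1, h2]
    _ = ∑ k ∈ range (y - x).val, (φ (x + (k + 1 : ℕ)) - φ (x + k)) := by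
        refine sum_congr rfl fun k hk => ?_
        rw [Nat.cast_succ, ← add_assoc]
        have hAC' : ∀ {i}, i ∈ A → i ∉ C := fun h => Finset.disjoint_left.mp hAC h
        have := hstep k (mem_range.mp hk)
        by_cases h1 : x + (k : Fin (m + 3)) ∈ A <;> by_cases h2 : x + (k : Fin (m + 3)) + 1 ∈ A <;>
          simp [hψ, hφ, h1, h2, hAC', this]
    _ = φ y - φ x := by
        rw [sum_range_sub (fun k => φ (x + k)), Nat.cast_zero, add_zero, add_val_sub]

end Cycle

namespace AbstractTriangulation

variable {V : Type} [DecidableEq V] [Fintype V] (K : AbstractTriangulation V)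

theorem boundary_le_skeleton : K.boundary ≤ K.skeleton := by
  rintro u v ⟨huv, h⟩
  obtain ⟨t, ht, hut, hvt⟩ := filter_nonempty_iff.mp (card_pos.mp (h ▸ Nat.one_pos))
  exact ⟨huv, t, ht, hut, hvt⟩

theorem cast_card_tris_containing_pair [DecidableRel K.boundary.Adj] {a b : V} (hab : a ≠ b) :
    (#{t ∈ K.tris | a ∈ t ∧ b ∈ t} : ZMod 2) = if K.boundary.Adj a b then 1 else 0 := by
  have hpair : ∀ t, ({a, b} : Finset V) ⊆ t ↔ a ∈ t ∧ b ∈ t := fun t => by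
    simp [insert_subset_iff]
  by_cases hab' : ∃ t ∈ K.tris, a ∈ t ∧ b ∈ t
  · have := K.edge_mem {a, b} (card_pair hab) (by simpa only [hpair] using hab')
    simp only [hpair] at this
    rcases this with h | h
    · rw [if_pos ⟨hab, h⟩, h, Nat.cast_one]
    · rw [if_neg fun h' => by simp_all [boundary], h]
      rfl
  · rw [if_neg fun (h : K.boundary.Adj a b) =>
        hab' (filter_nonempty_iff.mp (card_pos.mp (h.2 ▸ Nat.one_pos))),
      filter_false_of_mem fun t ht h => hab' ⟨t, ht, h⟩, card_empty, Nat.cast_zero]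

theorem sum_sum_card_tris_containing (A C : Finset V) :
    ∑ a ∈ A, ∑ c ∈ C, #{t ∈ K.tris | a ∈ t ∧ c ∈ t} = ∑ t ∈ K.tris, #(t ∩ A) * #(t ∩ C) := by
  calc ∑ a ∈ A, ∑ c ∈ C, #{t ∈ K.tris | a ∈ t ∧ c ∈ t}
      = ∑ a ∈ A, ∑ t ∈ K.tris, ∑ c ∈ C, if a ∈ t ∧ c ∈ t then 1 else 0 := by
        simp only [card_filter]
        exact sum_congr rfl fun a _ => sum_comm
    _ = ∑ t ∈ K.tris, ∑ a ∈ A, ∑ c ∈ C, if a ∈ t ∧ c ∈ t then 1 else 0 := sum_comm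
    _ = ∑ t ∈ K.tris, #(t ∩ A) * #(t ∩ C) := by
        refine sum_congr rfl fun t _ => ?_
        rw [inter_comm t A, inter_comm t C, ← filter_mem_eq_inter, ← filter_mem_eq_inter,
          card_filter, card_filter, sum_mul_sum]
        simp only [ite_zero_mul_ite_zero, mul_one]

theorem sum_sum_boundary_adj_eq_zero [DecidableRel K.boundary.Adj] {A C : Finset V}
    (hAC : Disjoint A C) (htri : ∀ t ∈ K.tris, Even (#(t ∩ A) * #(t ∩ C))) :
    ∑ a ∈ A, ∑ c ∈ C, (if K.boundary.Adj a c then (1 : ZMod 2) else 0) = 0 := by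
  calc ∑ a ∈ A, ∑ c ∈ C, (if K.boundary.Adj a c then (1 : ZMod 2) else 0)
      = ∑ a ∈ A, ∑ c ∈ C, (#{t ∈ K.tris | a ∈ t ∧ c ∈ t} : ZMod 2) := by
        refine sum_congr rfl fun a ha => sum_congr rfl fun c hc => ?_
        exact (K.cast_card_tris_containing_pair
          (ne_of_mem_of_not_mem hc (Finset.disjoint_left.mp hAC ha)).symm).symm
    _ = ∑ t ∈ K.tris, (#(t ∩ A) * #(t ∩ C) : ℕ) := by
        simp only [← Nat.cast_sum, sum_sum_card_tris_containing]
    _ = 0 := by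
        rw [Nat.cast_sum]
        exact sum_eq_zero fun t ht => ZMod.natCast_eq_zero_iff_even.mpr (htri t ht)

theorem subset_union_of_inter_nonempty {A C T : Finset V}
    (hA : ∀ u ∈ A, ∀ v, K.skeleton.Adj u v → v ∈ A ∨ v ∈ T)
    (hC : ∀ u ∈ C, ∀ v ∈ T, K.skeleton.Adj u v → v ∈ C) :
    ∀ t ∈ K.tris, (t ∩ A).Nonempty → (t ∩ C).Nonempty → t ⊆ A ∪ C := by
  rintro t ht ⟨a, ha⟩ ⟨c, hc⟩ w hw
  rw [mem_inter] at ha hc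
  rw [mem_union]
  by_cases hwa : w = a
  · exact Or.inl (hwa ▸ ha.2)
  refine (hA a ha.2 w ⟨Ne.symm hwa, t, ht, ha.1, hw⟩).imp_right fun hwT => ?_
  by_cases hwc : w = c
  · exact hwc ▸ hc.2
  exact hC c hc.2 w hwT ⟨Ne.symm hwc, t, ht, hc.1, hw⟩

theorem BoundaryIsCycle.sum_sum_boundary_adj {K : AbstractTriangulation V} {n : ℕ}
    {f : Fin n → V} (hK : K.BoundaryIsCycle n f) [DecidableRel K.boundary.Adj]
    {M : Type*} [AddCommMonoidWithOne M] (A C : Finset V) :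
    ∑ a ∈ A, ∑ c ∈ C, (if K.boundary.Adj a c then (1 : M) else 0) =
      ∑ i ∈ A.preimage f hK.1.injOn, ∑ j ∈ C.preimage f hK.1.injOn,
        (if (cycleGraph n).Adj i j then 1 else 0) := by
  obtain ⟨hinj, hadj, hrange⟩ := hK
  simp only [← hadj]
  have hinner : ∀ a, ∑ j ∈ C.preimage f hinj.injOn,
      (if K.boundary.Adj a (f j) then (1 : M) else 0) =
        ∑ c ∈ C, if K.boundary.Adj a c then 1 else 0 := fun a =>
    sum_preimage f C _ _ fun c _ hc => if_neg fun h => hc ((hrange _ _ h).2.imp fun j => Eq.symm)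
  simp only [hinner]
  exact (sum_preimage f A _ (fun a => ∑ c ∈ C, if K.boundary.Adj a c then (1 : M) else 0)
    fun a _ ha => sum_eq_zero fun c _ =>
      if_neg fun h => ha ((hrange _ _ h).1.imp fun i => Eq.symm)).symm

open scoped Fin.NatCast

theorem BoundaryIsCycle.mem_iff_mem_of_walls {K : AbstractTriangulation V} {n : ℕ} [NeZero n]
    (hn : 3 ≤ n) {f : Fin n → V} (hK : K.BoundaryIsCycle n f) {x y : Fin n} {A C T : Finset V}
    (hAT : Disjoint A T) (hCT : C ⊆ T)
    (hA : ∀ u ∈ A, ∀ v, K.skeleton.Adj u v → v ∈ A ∨ v ∈ T)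
    (hC : ∀ u ∈ C, ∀ v ∈ T, K.skeleton.Adj u v → v ∈ C)
    (hA_arc : ∀ i, f i ∈ A → i ∈ arcInterior x y)
    (harc : ∀ i ∈ arcInterior x y, f i ∈ A ∨ f i ∈ T) (hxT : f x ∈ T) (hyT : f y ∈ T) :
    f x ∈ C ↔ f y ∈ C := by
  classical
  have hAC : Disjoint A C := disjoint_of_subset_right hCT hAT
  have harc_closed : ∀ k ≤ (y - x).val, f (x + k) ∈ A ∨ f (x + k) ∈ T := fun k hk => by
    rcases add_natCast_eq_or_mem_arcInterior hk with h | h | h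
    · exact Or.inr (by rwa [h])
    · exact Or.inr (by rwa [h])
    · exact harc _ h
  have hstep : ∀ k < (y - x).val, x + k ∉ A.preimage f hK.1.injOn →
      x + k + 1 ∉ A.preimage f hK.1.injOn →
      (x + k ∈ C.preimage f hK.1.injOn ↔ x + k + 1 ∈ C.preimage f hK.1.injOn) := by
    intro k hk h1 h2
    rw [mem_preimage] at h1 h2 ⊢
    rw [mem_preimage]
    have ht1 := (harc_closed k hk.le).resolve_left h1
    have ht2 := (harc_closed (k + 1) hk).resolve_left (by rwa [Nat.cast_succ, ← add_assoc])
    rw [Nat.cast_succ, ← add_assoc] at ht2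
    have hadj : K.skeleton.Adj (f (x + k)) (f (x + k + 1)) :=
      K.boundary_le_skeleton ((hK.2.1 _ _).mpr (cycleGraph_adj_add_one (by omega) _))
    exact ⟨fun h => hC _ h _ ht2 hadj, fun h => hC _ h _ ht1 hadj.symm⟩
  have h := K.sum_sum_boundary_adj_eq_zero hAC fun t ht => even_card_inter_mul_card_inter
    (by rw [K.card_three t ht]; decide) hAC (K.subset_union_of_inter_nonempty hA hC t ht)
  rw [hK.sum_sum_boundary_adj, sum_sum_cycleGraph_adj_eq_sub hn
    (fun i hi => hA_arc i (mem_preimage.mp hi)) (disjoint_preimage hAC) hstep] at h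
  simp only [mem_preimage] at h
  split_ifs at h <;> simp_all

theorem exists_walk_length_le_of_separates {n : ℕ} [NeZero n] (hn : 3 ≤ n) {f : Fin n → V}
    (hK : K.BoundaryIsCycle n f) {x y : Fin n} {R : Set (Fin n)}
    (hR : ∀ i, i ≠ x → i ≠ y → i ∉ arcInterior x y → i ∈ R) (S : Finset V)
    (hsep : ∀ (u v : V) (p : K.skeleton.Walk u v),
      u ∈ f '' arcInterior x y → v ∈ f '' R → f x ∉ p.support → f y ∉ p.support →
      ∃ s ∈ S, s ∈ p.support) :
    ∃ p : K.skeleton.Walk (f x) (f y), p.length ≤ #S + 1 := by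
  classical
  set T : Finset V := insert (f x) (insert (f y) S)
  have hxT : f x ∈ T := mem_insert_self _ _
  have hyT : f y ∈ T := mem_insert_of_mem (mem_insert_self _ _)
  set A : Finset V := {v | ∃ i ∈ arcInterior x y, K.skeleton.ReachableIn (↑T)ᶜ (f i) v}
  set C : Finset V := {v | K.skeleton.ReachableIn T (f x) v}
  have hAT : Disjoint A T := Finset.disjoint_left.mpr fun v hv => by
    obtain ⟨i, -, h⟩ := (mem_filter_univ v).mp hv
    exact h.mem_right
  have hCT : C ⊆ T := fun v hv => ((mem_filter_univ v).mp hv).mem_right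
  have hA : ∀ u ∈ A, ∀ v, K.skeleton.Adj u v → v ∈ A ∨ v ∈ T := by
    intro u hu v huv
    refine or_iff_not_imp_right.mpr fun hv => ?_
    obtain ⟨i, hi, h⟩ := (mem_filter_univ u).mp hu
    exact (mem_filter_univ v).mpr ⟨i, hi, h.concat huv hv⟩
  have hC : ∀ u ∈ C, ∀ v ∈ T, K.skeleton.Adj u v → v ∈ C := fun u hu v hv huv =>
    (mem_filter_univ v).mpr (((mem_filter_univ u).mp hu).concat huv hv)
  have hA_arc : ∀ i, f i ∈ A → i ∈ arcInterior x y := by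
    intro i hi
    by_contra hni
    obtain ⟨j, hj, p, hp⟩ := (mem_filter_univ _).mp hi
    have hix : i ≠ x := fun h => Finset.disjoint_left.mp hAT hi (h ▸ hxT)
    have hiy : i ≠ y := fun h => Finset.disjoint_left.mp hAT hi (h ▸ hyT)
    obtain ⟨s, hs, hsp⟩ := hsep _ _ p ⟨j, hj, rfl⟩ ⟨i, hR i hix hiy hni, rfl⟩
      (fun h => hp _ h hxT) (fun h => hp _ h hyT)
    exact hp s hsp (mem_insert_of_mem (mem_insert_of_mem hs))
  have harc : ∀ i ∈ arcInterior x y, f i ∈ A ∨ f i ∈ T := fun i hi =>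
    or_iff_not_imp_right.mpr fun hiT => (mem_filter_univ _).mpr ⟨i, hi, .refl hiT⟩
  have hyC : f y ∈ C := (hK.mem_iff_mem_of_walls hn hAT hCT hA hC hA_arc harc hxT hyT).mp
    ((mem_filter_univ _).mpr (.refl hxT))
  obtain ⟨p, hp⟩ := ((mem_filter_univ _).mp hyC).exists_walk_length_lt
  have hT : #T ≤ #(insert (f y) S) + 1 := card_insert_le _ _
  have hS := card_insert_le (f y) S
  exact ⟨p, by omega⟩

end AbstractTriangulation

theorem separator_lower_bound_general {V : Type} [DecidableEq V] [Fintype V]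
    (δ : ℝ) (n : ℕ) (hn : 4 ≤ n)
    (K : AbstractTriangulation V) (f : Fin n → V)
    (hK : K.IsLipschitzFilling n δ f)
    (x y : Fin n) (hdist : (SimpleGraph.cycleGraph n).dist x y = n / 2)
    (L R : Set (Fin n))
    (hLne : L.Nonempty) (hRne : R.Nonempty) (hdisj : Disjoint L R)
    (hxL : x ∉ L) (hyL : y ∉ L) (hxR : x ∉ R) (hyR : y ∉ R)
    (hcover : ∀ u : Fin n, u ≠ x → u ≠ y → u ∈ L ∨ u ∈ R)
    (hLR : ∀ u ∈ L, ∀ v ∈ R, ¬ (deletedCycle n x y).Reachable u v)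
    (S : Finset V)
    (hsep : ∀ (u v : V) (p : K.skeleton.Walk u v),
      u ∈ f '' L → v ∈ f '' R → f x ∉ p.support → f y ∉ p.support →
      ∃ s ∈ S, s ∈ p.support) :
    δ * ((n / 2 : ℕ) : ℝ) - 1 ≤ (S.card : ℝ) := by
  have : NeZero n := ⟨by omega⟩
  obtain ⟨hbdry, hlip⟩ := hK
  have hxy : x ≠ y := by
    rintro rfl
    rw [SimpleGraph.dist_self] at hdist
    omega
  suffices ∃ p : K.skeleton.Walk (f x) (f y), p.length ≤ #S + 1 by
    obtain ⟨p, hp⟩ := this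
    have hδ := hlip x y p
    rw [hdist] at hδ
    have : (p.length : ℝ) ≤ #S + 1 := by exact_mod_cast hp
    linarith
  rcases eq_arcInterior_or_eq_arcInterior hxy hLne hRne hdisj hxL hyL hxR hyR hcover hLR
    with rfl | rfl
  · exact K.exists_walk_length_le_of_separates (by omega) hbdry
      (fun i hx hy hi => (hcover i hx hy).resolve_left hi) S hsep
  · obtain ⟨p, hp⟩ := K.exists_walk_length_le_of_separates (by omega) hbdry (x := y) (y := x)
      (fun i hy hx hi => (hcover i hx hy).resolve_left hi) S
      fun u v p hu hv hy hx => hsep u v p hu hv hx hy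
    exact ⟨p.reverse, by rwa [Walk.length_reverse]⟩

/-- Fix `0 < δ ≤ 1`, `n ≥ 4`, a `δ`-Lipschitz filling `K` of
`C_n`, vertices `x,y` of `C_n` with `d_{C_n}(x,y) = ⌊n/2⌋`, and the two
components `L,R` of `C_n - x - y`. Every `S ⊆ V(K) \ {x,y}` separating `L`
from `R` in `K - x - y` satisfies `|S| ≥ δ⌊n/2⌋ - 1`. -/
theorem separator_lower_bound {V : Type} [DecidableEq V] [Fintype V]
    (δ : ℝ) (hδ0 : 0 < δ) (hδ1 : δ ≤ 1) (n : ℕ) (hn : 4 ≤ n)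
    (K : AbstractTriangulation V) (f : Fin n → V)
    (hK : K.IsLipschitzFilling n δ f)
    (x y : Fin n) (hdist : (SimpleGraph.cycleGraph n).dist x y = n / 2)
    (L R : Set (Fin n))
    (hLne : L.Nonempty) (hRne : R.Nonempty) (hdisj : Disjoint L R)
    (hxL : x ∉ L) (hyL : y ∉ L) (hxR : x ∉ R) (hyR : y ∉ R)
    (hcover : ∀ u : Fin n, u ≠ x → u ≠ y → u ∈ L ∨ u ∈ R)
    (hLconn : ∀ u ∈ L, ∀ v ∈ L, (deletedCycle n x y).Reachable u v)
    (hRconn : ∀ u ∈ R, ∀ v ∈ R, (deletedCycle n x y).Reachable u v)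
    (hLR : ∀ u ∈ L, ∀ v ∈ R, ¬ (deletedCycle n x y).Reachable u v)
    (S : Finset V) (hSK : S ⊆ K.verts) (hSx : f x ∉ S) (hSy : f y ∉ S)
    (hsep : ∀ (u v : V) (p : K.skeleton.Walk u v),
      u ∈ f '' L → v ∈ f '' R → f x ∉ p.support → f y ∉ p.support →
      ∃ s ∈ S, s ∈ p.support) :
    δ * ((n / 2 : ℕ) : ℝ) - 1 ≤ (S.card : ℝ) :=
  separator_lower_bound_general δ n hn K f hK x y hdist L R hLne hRne hdisj hxL hyL hxR hyR hcover
    hLR S hsep
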